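/- For all non-negative integers m with m ≥ 0, the integers a(m) and a(m+1) are coprime, where a is Stern's diatomic sequence. -/
import Mathlib


/-- Stern's diatomic sequence: a(0)=0, a(1)=1, a(2m)=a(m), a(2m+1)=a(m)+a(m+1). -/
def stern : ℕ → ℕ
  | 0 => 0
  | 1 => 1
  | n + 2 =>
    if _h : n % 2 = 0 then stern (n / 2 + 1)
    else stern (n / 2 + 1) + stern (n / 2 + 2)
decreasing_by
  · omega
  · omega
  · omega

lemma stern_two_mul (m : ℕ) : stern (2 * m) = stern m := by
  match m with
  | 0 => rfl
  | m + 1 =>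
    have h : 2 * (m + 1) = 2 * m + 2 := by ring
    rw [h, stern]
    simp [Nat.mul_div_cancel_left, Nat.mul_mod_right]

lemma stern_two_mul_add_one (m : ℕ) :
    stern (2 * m + 1) = stern m + stern (m + 1) := by
  match m with
  | 0 => simp [stern]
  | m + 1 =>
    have h : 2 * (m + 1) + 1 = (2 * m + 1) + 2 := by ring
    rw [h, stern]
    have h2 : (2 * m + 1) % 2 = 1 := by omega
    have h3 : (2 * m + 1) / 2 = m := by omega
    simp [h2, h3]

theorem stern_coprime_succ (m : ℕ) :
    Nat.Coprime (stern m) (stern (m + 1)) := by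
  induction m using Nat.strong_induction_on with
  | _ m ih =>
    match m with
    | 0 => simp [stern, Nat.Coprime]
    | m + 1 =>
      rcases Nat.even_or_odd (m + 1) with ⟨k, hk⟩ | ⟨k, hk⟩
      · have hk' : m + 1 = 2 * k := by omega
        rw [hk', stern_two_mul, stern_two_mul_add_one]
        have := ih k (by omega)
        simpa [Nat.Coprime, Nat.gcd_add_self_right] using this
      · rw [hk, stern_two_mul_add_one]
        have h2 : 2 * k + 1 + 1 = 2 * (k + 1) := by ring
        rw [h2, stern_two_mul]
        have := ih k (by omega)
        simpa [Nat.Coprime, Nat.gcd_add_self_left, Nat.gcd_comm] using this
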